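/- arXiv:2312.14388 — 2 statements merged into one kernel-verified Lean document; each statement's English description precedes it below -/
import Mathlib

section
/- Let ε ≥ 0, δ ∈ [0,1), let R be an (ε,δ)-LDP randomizer from D to S, and let x_0, x_1 ∈ D. Let X̃_0 and X̃_1 be the probability distributions on the four-point set {A, 0, 1, B} given by X̃_0({A}) = δ, X̃_0({0}) = (1−δ)e^ε/(1+e^ε), X̃_0({1}) = (1−δ)/(1+e^ε), X̃_0({B}) = 0, and X̃_1({A}) = 0, X̃_1({0}) = (1−δ)/(1+e^ε), X̃_1({1}) = (1−δ)e^ε/(1+e^ε), X̃_1({B}) = δ. Then there exists a single Markov kernel proc from {A,0,1,B} to S such that for b ∈ {0,1}, R(x_b) equals the composition of X̃_b with proc (i.e., R(x_b) is a post-processing of X̃_b). -/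
/-!
Write `P = R x0`, `Q = R x1`, `k = e^ε` and `d = δ`, so that `P A ≤ k Q A + d` and
`Q A ≤ k P A + d`. Passing to densities `f`, `g` with respect to `P + Q`, these bounds say that
`min f (k g)` and `min g (k f)` both have mass at least `1 - d`; by interpolating between such
envelopes one finds sub-densities `p ≤ f`, `h ≤ g` of mass exactly `1 - d` with `p ≤ k h` and
`h ≤ k p`. The remainders `f - p` and `g - h` have mass `d` and are what the points `A` and `B`
are sent to. The mutually `k`-bounded pair `P' = p (P + Q)`, `Q' = h (P + Q)` then splits as
`P' = c (k μ₀ + μ₁)`, `Q' = c (μ₀ + k μ₁)` with `c = (1 - d) / (1 + k)`, by solving this linear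
system: `μ₀ ∝ k P' - Q'` and `μ₁ ∝ k Q' - P'`, which are measures precisely because of the mutual
bounds (for `k = 1` the system degenerates, `P' = Q'`, and one takes `μ₀ = μ₁`).
-/

open MeasureTheory ProbabilityTheory

noncomputable section

/-- `R` is an `(ε,δ)`-LDP randomizer. -/
def IsLDPKernel {D S : Type*} [MeasurableSpace D] [MeasurableSpace S]
    (R : Kernel D S) (ε δ : ℝ) : Prop :=
  ∀ x x' : D, ∀ A : Set S, MeasurableSet A →
    R x A ≤ ENNReal.ofReal (Real.exp ε) * R x' A + ENNReal.ofReal δ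

/-- The four-point distribution `X̃₀` on `{A, 0, 1, B}` (encoded as `Fin 4`, in this order):
`X̃₀({A}) = δ`, `X̃₀({0}) = (1-δ)e^ε/(1+e^ε)`, `X̃₀({1}) = (1-δ)/(1+e^ε)`, `X̃₀({B}) = 0`. -/
def tildeX0 (ε δ : ℝ) : Measure (Fin 4) :=
  ENNReal.ofReal δ • Measure.dirac 0 +
    ENNReal.ofReal ((1 - δ) * Real.exp ε / (1 + Real.exp ε)) • Measure.dirac 1 +
    ENNReal.ofReal ((1 - δ) / (1 + Real.exp ε)) • Measure.dirac 2

/-- The four-point distribution `X̃₁` on `{A, 0, 1, B}` (encoded as `Fin 4`):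
`X̃₁({A}) = 0`, `X̃₁({0}) = (1-δ)/(1+e^ε)`, `X̃₁({1}) = (1-δ)e^ε/(1+e^ε)`, `X̃₁({B}) = δ`. -/
def tildeX1 (ε δ : ℝ) : Measure (Fin 4) :=
  ENNReal.ofReal ((1 - δ) / (1 + Real.exp ε)) • Measure.dirac 1 +
    ENNReal.ofReal ((1 - δ) * Real.exp ε / (1 + Real.exp ε)) • Measure.dirac 2 +
    ENNReal.ofReal δ • Measure.dirac 3

open scoped ENNReal

theorem ENNReal.mul_tsub_add_tsub_eq {k x y : ℝ≥0∞} (hk : 1 ≤ k) (hk_ne_top : k ≠ ⊤)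
    (hx : x ≠ ⊤) (hy : y ≠ ⊤) (hyx : y ≤ k * x) (hxy : x ≤ k * y) :
    k * (k * x - y) + (k * y - x) = (k * k - 1) * x := by
  rw [← ENNReal.toReal_eq_toReal_iff' (by finiteness) (by finiteness),
    toReal_add (by finiteness) (by finiteness), toReal_mul, toReal_mul,
    toReal_sub_of_le hyx (by finiteness), toReal_sub_of_le hxy (by finiteness),
    toReal_sub_of_le (one_le_mul hk hk) (by finiteness)]
  simp only [toReal_mul, toReal_one]
  ring

theorem ENNReal.mul_tsub_self_eq {k c : ℝ≥0∞} (hk : 1 ≤ k) (hk_ne_top : k ≠ ⊤) (hc : c ≠ ⊤) :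
    k * ((1 + k) * c) - (1 + k) * c = (k * k - 1) * c := by
  rw [← ENNReal.toReal_eq_toReal_iff' (by finiteness) (by finiteness),
    toReal_sub_of_le (le_mul_of_one_le_left zero_le hk) (by finiteness), toReal_mul,
    toReal_mul (a := k * k - 1), toReal_sub_of_le (one_le_mul hk hk) (by finiteness)]
  simp only [toReal_mul, toReal_one, toReal_add one_ne_top hk_ne_top]
  ring

namespace MeasureTheory

section Densities

variable {S : Type*} [MeasurableSpace S] {m : Measure S} {f g : S → ℝ≥0∞} {k : ℝ≥0∞}

theorem exists_between_lintegral_eq {u v : S → ℝ≥0∞} {c : ℝ≥0∞} (hu : Measurable u)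
    (hv : Measurable v) (huv : u ≤ v) (hcu : ∫⁻ x, u x ∂m ≤ c) (hcv : c ≤ ∫⁻ x, v x ∂m)
    (hv_ne_top : ∫⁻ x, v x ∂m ≠ ⊤) :
    ∃ w : S → ℝ≥0∞, Measurable w ∧ u ≤ w ∧ w ≤ v ∧ ∫⁻ x, w x ∂m = c := by
  set t := (c - ∫⁻ x, u x ∂m) / (∫⁻ x, v x ∂m - ∫⁻ x, u x ∂m)
  have ht : t ≤ 1 := ENNReal.div_le_of_le_mul (by rw [one_mul]; exact tsub_le_tsub_right hcv _)
  have hu_ne_top : ∫⁻ x, u x ∂m ≠ ⊤ := ne_top_of_le_ne_top hv_ne_top (lintegral_mono huv)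
  refine ⟨fun x => u x + t * (v x - u x), hu.add ((hv.sub hu).const_mul t),
    fun x => le_self_add, fun x => ?_, ?_⟩
  · calc u x + t * (v x - u x) ≤ u x + 1 * (v x - u x) := by gcongr
      _ = v x := by rw [one_mul, add_tsub_cancel_of_le (huv x)]
  · rw [lintegral_add_left hu, lintegral_const_mul t (f := fun x => v x - u x) (hv.sub hu),
      lintegral_sub hu hu_ne_top (ae_of_all _ huv)]
    rcases eq_or_ne (∫⁻ x, v x ∂m - ∫⁻ x, u x ∂m) 0 with h0 | h0
    · rw [h0, mul_zero, add_zero]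
      exact le_antisymm hcu ((hcv.trans (tsub_eq_zero_iff_le.1 h0)))
    · rw [ENNReal.div_mul_cancel h0 (ENNReal.sub_ne_top hv_ne_top), add_tsub_cancel_of_le hcu]

theorem lintegral_le_lintegral_min_add (hf : Measurable f) (hg : Measurable g) {d : ℝ≥0∞}
    (h : ∀ A, MeasurableSet A → m.withDensity f A ≤ k * m.withDensity g A + d) :
    ∫⁻ x, f x ∂m ≤ ∫⁻ x, min (f x) (k * g x) ∂m + d := by
  set E := {x | k * g x < f x}
  have hE : MeasurableSet E := measurableSet_lt (hg.const_mul k) hf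
  have hmin_E : ∫⁻ x in E, min (f x) (k * g x) ∂m = k * ∫⁻ x in E, g x ∂m := by
    rw [← lintegral_const_mul k hg]
    exact setLIntegral_congr_fun hE fun x hx => min_eq_right (le_of_lt hx)
  have hmin_Ec : ∫⁻ x in Eᶜ, min (f x) (k * g x) ∂m = ∫⁻ x in Eᶜ, f x ∂m :=
    setLIntegral_congr_fun hE.compl fun x hx => min_eq_left (not_lt.1 hx)
  have hfE : ∫⁻ x in E, f x ∂m ≤ k * ∫⁻ x in E, g x ∂m + d := by
    simpa only [withDensity_apply _ hE] using h E hE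
  calc ∫⁻ x, f x ∂m = ∫⁻ x in E, f x ∂m + ∫⁻ x in Eᶜ, f x ∂m := (lintegral_add_compl f hE).symm
    _ ≤ k * ∫⁻ x in E, g x ∂m + d + ∫⁻ x in Eᶜ, f x ∂m := by gcongr
    _ = ∫⁻ x, min (f x) (k * g x) ∂m + d := by
      rw [← lintegral_add_compl (fun x => min (f x) (k * g x)) hE, hmin_E, hmin_Ec]; ring

variable {θ : ℝ≥0∞}

theorem exists_density_le_min_of_le_lintegral_min (hf : Measurable f) (hg : Measurable g)
    (hk : 1 ≤ k) (hk_ne_top : k ≠ ⊤) (hg_ne_top : ∫⁻ x, g x ∂m ≠ ⊤)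
    (hθf : θ ≤ ∫⁻ x, min (f x) (k * g x) ∂m) (hθg : θ ≤ ∫⁻ x, min (g x) (k * f x) ∂m) :
    ∃ h : S → ℝ≥0∞, Measurable h ∧ (∀ x, h x ≤ min (g x) (k * f x)) ∧ ∫⁻ x, h x ∂m = θ ∧
      θ ≤ ∫⁻ x, min (f x) (k * h x) ∂m := by
  have hk0 : k ≠ 0 := (zero_lt_one.trans_le hk).ne'
  set c₁ : S → ℝ≥0∞ := fun x => min (g x) (k⁻¹ * f x)
  set c₂ : S → ℝ≥0∞ := fun x => min (g x) (k * f x)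
  have hc₁ : Measurable c₁ := hg.min (hf.const_mul _)
  have hc₂ : Measurable c₂ := hg.min (hf.const_mul _)
  have hc₁_le_c₂ : c₁ ≤ c₂ := fun x =>
    min_le_min_left _ (mul_le_mul_left ((ENNReal.inv_le_one.2 hk).trans hk) _)
  have hc₂_ne_top : ∫⁻ x, c₂ x ∂m ≠ ⊤ :=
    ne_top_of_le_ne_top hg_ne_top (lintegral_mono fun x => min_le_left _ _)
  have hkc₁ : ∀ x, k * c₁ x = min (k * g x) (f x) := fun x => by
    simp only [c₁, mul_min, ← mul_assoc, ENNReal.mul_inv_cancel hk0 hk_ne_top, one_mul]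
  rcases le_or_gt θ (∫⁻ x, c₁ x ∂m) with hθc₁ | hc₁θ
  · -- below `c₁` the constraint `k * h ≤ f` holds, so `min f (k * h) = k * h`
    obtain ⟨h, hh, -, hhc₁, hθ⟩ := exists_between_lintegral_eq (measurable_const (a := 0)) hc₁
      (fun _ => zero_le) (by simp) hθc₁
      (ne_top_of_le_ne_top hc₂_ne_top (lintegral_mono hc₁_le_c₂))
    refine ⟨h, hh, fun x => (hhc₁ x).trans (hc₁_le_c₂ x), hθ, ?_⟩
    have hkh : ∀ x, min (f x) (k * h x) = k * h x := fun x =>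
      min_eq_right <| calc k * h x ≤ k * c₁ x := by gcongr; exact hhc₁ x
        _ ≤ f x := (hkc₁ x).trans_le (min_le_right _ _)
    simp only [hkh, lintegral_const_mul k hh, hθ]
    exact le_mul_of_one_le_left zero_le hk
  · obtain ⟨h, hh, hc₁h, hhc₂, hθ⟩ :=
      exists_between_lintegral_eq hc₁ hc₂ hc₁_le_c₂ hc₁θ.le hθg hc₂_ne_top
    refine ⟨h, hh, hhc₂, hθ, hθf.trans (lintegral_mono fun x => ?_)⟩
    calc min (f x) (k * g x) = min (f x) (min (k * g x) (f x)) := by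
          rw [min_comm (k * g x), ← min_assoc, min_self]
      _ = min (f x) (k * c₁ x) := by rw [hkc₁]
      _ ≤ min (f x) (k * h x) := by gcongr; exact hc₁h x

theorem exists_subdensities_le_mul (hf : Measurable f) (hg : Measurable g)
    (hk : 1 ≤ k) (hk_ne_top : k ≠ ⊤) (hf_ne_top : ∫⁻ x, f x ∂m ≠ ⊤)
    (hg_ne_top : ∫⁻ x, g x ∂m ≠ ⊤)
    (hθf : θ ≤ ∫⁻ x, min (f x) (k * g x) ∂m) (hθg : θ ≤ ∫⁻ x, min (g x) (k * f x) ∂m) :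
    ∃ p h : S → ℝ≥0∞, Measurable p ∧ Measurable h ∧ (∀ x, p x ≤ f x) ∧ (∀ x, h x ≤ g x) ∧
      ∫⁻ x, p x ∂m = θ ∧ ∫⁻ x, h x ∂m = θ ∧ (∀ x, p x ≤ k * h x) ∧ (∀ x, h x ≤ k * p x) := by
  have hk0 : k ≠ 0 := (zero_lt_one.trans_le hk).ne'
  obtain ⟨h, hh, hh_le, hθh, hθ⟩ :=
    exists_density_le_min_of_le_lintegral_min hf hg hk hk_ne_top hg_ne_top hθf hθg
  have hk_inv_h_le : ∀ x, k⁻¹ * h x ≤ min (f x) (k * h x) := fun x => by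
    refine le_min ?_ (mul_le_mul_left ((ENNReal.inv_le_one.2 hk).trans hk) _)
    calc k⁻¹ * h x ≤ k⁻¹ * (k * f x) := by gcongr; exact (hh_le x).trans (min_le_right _ _)
      _ = f x := by rw [← mul_assoc, ENNReal.inv_mul_cancel hk0 hk_ne_top, one_mul]
  obtain ⟨p, hp, hhp, hp_le, hθp⟩ := exists_between_lintegral_eq (hh.const_mul k⁻¹)
    (hf.min (hh.const_mul k)) hk_inv_h_le
    (by rw [lintegral_const_mul _ hh, hθh]
        exact mul_le_of_le_one_left zero_le (ENNReal.inv_le_one.2 hk))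
    hθ (ne_top_of_le_ne_top hf_ne_top (lintegral_mono fun x => min_le_left _ _))
  refine ⟨p, h, hp, hh, fun x => (hp_le x).trans (min_le_left _ _),
    fun x => (hh_le x).trans (min_le_left _ _), hθp, hθh,
    fun x => (hp_le x).trans (min_le_right _ _), fun x => ?_⟩
  calc h x = k * (k⁻¹ * h x) := by rw [← mul_assoc, ENNReal.mul_inv_cancel hk0 hk_ne_top, one_mul]
    _ ≤ k * p x := by gcongr; exact hhp x

end Densities

namespace Measure

variable {S : Type*} [MeasurableSpace S] {P Q : Measure S} {k : ℝ≥0∞}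

theorem exists_isProbabilityMeasure_smul_eq [Nonempty S] (ν : Measure S) [IsFiniteMeasure ν] :
    ∃ μ : Measure S, IsProbabilityMeasure μ ∧ ν = ν Set.univ • μ := by
  by_cases hν : ν = 0
  · exact ⟨Measure.dirac (Classical.arbitrary S), inferInstance, by simp [hν]⟩
  have hν' : ν Set.univ ≠ 0 := by simpa using hν
  refine ⟨(ν Set.univ)⁻¹ • ν, ⟨?_⟩, ?_⟩
  · simp [ENNReal.inv_mul_cancel hν' (measure_ne_top ν _)]
  · rw [smul_smul, ENNReal.mul_inv_cancel hν' (measure_ne_top ν _), one_smul]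

theorem add_bind {T : Type*} [MeasurableSpace T] (μ ν : Measure S) (κ : Kernel S T) :
    (μ + ν).bind κ = μ.bind κ + ν.bind κ := by
  ext s hs
  simp [Measure.bind_apply hs κ.measurable.aemeasurable]

theorem exists_smul_add_of_le_mul_add [IsProbabilityMeasure P] [IsProbabilityMeasure Q]
    {d : ℝ≥0∞} (hk : 1 ≤ k) (hk_ne_top : k ≠ ⊤) (hd : d ≤ 1)
    (hPQ : ∀ A, MeasurableSet A → P A ≤ k * Q A + d)
    (hQP : ∀ A, MeasurableSet A → Q A ≤ k * P A + d) :
    ∃ μA μB P' Q' : Measure S, IsProbabilityMeasure μA ∧ IsProbabilityMeasure μB ∧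
      P = d • μA + P' ∧ Q = Q' + d • μB ∧ P' Set.univ = 1 - d ∧ Q' Set.univ = 1 - d ∧
      P' ≤ k • Q' ∧ Q' ≤ k • P' := by
  have : Nonempty S := nonempty_of_isProbabilityMeasure P
  set m := P + Q
  have hPm : P ≪ m := AbsolutelyContinuous.rfl.add_right Q
  have hQm : Q ≪ m := AbsolutelyContinuous.rfl.add_right' P
  have hf := measurable_rnDeriv P m
  have hg := measurable_rnDeriv Q m
  have hP1 : ∫⁻ x, P.rnDeriv m x ∂m = 1 := by rw [lintegral_rnDeriv hPm, measure_univ]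
  have hQ1 : ∫⁻ x, Q.rnDeriv m x ∂m = 1 := by rw [lintegral_rnDeriv hQm, measure_univ]
  have hPQ' := lintegral_le_lintegral_min_add (k := k) hf hg
    (by rwa [withDensity_rnDeriv_eq P m hPm, withDensity_rnDeriv_eq Q m hQm])
  have hQP' := lintegral_le_lintegral_min_add (k := k) hg hf
    (by rwa [withDensity_rnDeriv_eq P m hPm, withDensity_rnDeriv_eq Q m hQm])
  rw [hP1, ← tsub_le_iff_right] at hPQ'
  rw [hQ1, ← tsub_le_iff_right] at hQP'
  obtain ⟨p, h, hp, hh, hpf, hhg, hp1, hh1, hph, hhp⟩ := exists_subdensities_le_mul hf hg hk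
    hk_ne_top (by simp [hP1]) (by simp [hQ1]) hPQ' hQP'
  have hrem {u v : S → ℝ≥0∞} (hv : Measurable v) (hvu : ∀ x, v x ≤ u x)
      (hu1 : ∫⁻ x, u x ∂m = 1) (hv1 : ∫⁻ x, v x ∂m = 1 - d) :
      ∃ μ : Measure S, IsProbabilityMeasure μ ∧ m.withDensity (fun x => u x - v x) = d • μ := by
    have hmass : m.withDensity (fun x => u x - v x) Set.univ = d := by
      rw [withDensity_apply _ MeasurableSet.univ, restrict_univ,
        lintegral_sub hv (by simp [hv1]) (ae_of_all _ hvu), hu1, hv1,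
        ENNReal.sub_sub_cancel ENNReal.one_ne_top hd]
    have : IsFiniteMeasure (m.withDensity fun x => u x - v x) :=
      ⟨by rw [hmass]; exact hd.trans_lt ENNReal.one_lt_top⟩
    obtain ⟨μ, hμ, hμ_eq⟩ := exists_isProbabilityMeasure_smul_eq (m.withDensity fun x => u x - v x)
    exact ⟨μ, hμ, hmass ▸ hμ_eq⟩
  obtain ⟨μA, hμA, hA⟩ := hrem hp hpf hP1 hp1
  obtain ⟨μB, hμB, hB⟩ := hrem hh hhg hQ1 hh1
  refine ⟨μA, μB, m.withDensity p, m.withDensity h, hμA, hμB, ?_, ?_, by simp [hp1],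
    by simp [hh1], ?_, ?_⟩
  · rw [← hA, ← withDensity_add_left (f := fun x => P.rnDeriv m x - p x) (hf.sub hp)]
    conv_lhs => rw [← withDensity_rnDeriv_eq P m hPm]
    congr 1; funext x; exact (tsub_add_cancel_of_le (hpf x)).symm
  · rw [← hB, ← withDensity_add_right h (g := fun x => Q.rnDeriv m x - h x) (hg.sub hh)]
    conv_lhs => rw [← withDensity_rnDeriv_eq Q m hQm]
    congr 1; funext x; exact (add_tsub_cancel_of_le (hhg x)).symm
  · rw [← withDensity_smul _ hh]
    exact withDensity_mono (ae_of_all _ hph)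
  · rw [← withDensity_smul _ hp]
    exact withDensity_mono (ae_of_all _ hhp)

theorem smul_sub_smul_add_smul_sub [IsFiniteMeasure P] [IsFiniteMeasure Q] (hk : 1 ≤ k)
    (hk_ne_top : k ≠ ⊤) (hPQ : P ≤ k • Q) (hQP : Q ≤ k • P) :
    k • (k • P - Q) + (k • Q - P) = (k * k - 1) • P := by
  ext s hs
  simp only [add_apply, smul_apply, sub_apply hs hQP, sub_apply hs hPQ, smul_eq_mul]
  exact ENNReal.mul_tsub_add_tsub_eq hk hk_ne_top (measure_ne_top P s) (measure_ne_top Q s)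
    (hQP s) (hPQ s)

theorem eq_smul_add_smul_of_sub_eq_smul [IsFiniteMeasure P] [IsFiniteMeasure Q] {c : ℝ≥0∞}
    {μ₀ μ₁ : Measure S} (hk : 1 < k) (hk_ne_top : k ≠ ⊤) (hc : c ≠ 0) (hc_ne_top : c ≠ ⊤)
    (hPQ : P ≤ k • Q) (hQP : Q ≤ k • P)
    (hμ₀ : k • P - Q = ((k * k - 1) * c) • μ₀) (hμ₁ : k • Q - P = ((k * k - 1) * c) • μ₁) :
    P = (k * c) • μ₀ + c • μ₁ := by
  set E := (k * k - 1) * c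
  have hE : E ≠ 0 := mul_ne_zero (tsub_pos_of_lt (one_lt_mul hk.le hk)).ne' hc
  have hE_ne_top : E ≠ ⊤ := by finiteness
  have hEE : E⁻¹ * E = 1 := ENNReal.inv_mul_cancel hE hE_ne_top
  calc P = (c * E⁻¹) • ((k * k - 1) • P) := by
        rw [smul_smul, mul_right_comm, mul_comm c, ENNReal.mul_inv_cancel hE hE_ne_top,
          one_smul]
    _ = (c * E⁻¹) • (k • (E • μ₀) + E • μ₁) := by
        rw [← smul_sub_smul_add_smul_sub hk.le hk_ne_top hPQ hQP, hμ₀, hμ₁]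
    _ = (k * c) • μ₀ + c • μ₁ := by
        rw [smul_add, smul_smul, smul_smul, smul_smul,
          show c * E⁻¹ * k * E = k * c * (E⁻¹ * E) by ring,
          show c * E⁻¹ * E = c * (E⁻¹ * E) by ring, hEE, mul_one, mul_one]

theorem exists_eq_smul_add_smul_of_le_smul {c : ℝ≥0∞} (hk : 1 ≤ k) (hk_ne_top : k ≠ ⊤)
    (hc : c ≠ 0) (hc_ne_top : c ≠ ⊤) (hP : P Set.univ = (1 + k) * c)
    (hQ : Q Set.univ = (1 + k) * c) (hPQ : P ≤ k • Q) (hQP : Q ≤ k • P) :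
    ∃ μ₀ μ₁ : Measure S, IsProbabilityMeasure μ₀ ∧ IsProbabilityMeasure μ₁ ∧
      P = (k * c) • μ₀ + c • μ₁ ∧ Q = c • μ₀ + (k * c) • μ₁ := by
  have : Nonempty S :=
    Set.nonempty_iff_univ_nonempty.2 (nonempty_of_measure_ne_zero (μ := P) (by simp [hP, hc]))
  have : IsFiniteMeasure P := ⟨by rw [hP]; finiteness⟩
  have : IsFiniteMeasure Q := ⟨by rw [hQ]; finiteness⟩
  rcases eq_or_lt_of_le hk with rfl | hk1
  · have hPQ_eq : P = Q := le_antisymm (by simpa using hPQ) (by simpa using hQP)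
    obtain ⟨μ, hμ, hPμ⟩ := P.exists_isProbabilityMeasure_smul_eq
    have hPμ' : P = (1 * c) • μ + c • μ := by rw [hPμ, hP, add_mul, add_smul, one_mul]
    exact ⟨μ, μ, hμ, hμ, hPμ', hPQ_eq ▸ hPμ'.trans (add_comm _ _)⟩
  · have : IsFiniteMeasure (k • P) := ⟨ENNReal.mul_lt_top hk_ne_top.lt_top (measure_lt_top P _)⟩
    have : IsFiniteMeasure (k • Q) := ⟨ENNReal.mul_lt_top hk_ne_top.lt_top (measure_lt_top Q _)⟩
    obtain ⟨μ₀, hμ₀, hPμ₀⟩ := (k • P - Q).exists_isProbabilityMeasure_smul_eq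
    obtain ⟨μ₁, hμ₁, hQμ₁⟩ := (k • Q - P).exists_isProbabilityMeasure_smul_eq
    rw [sub_apply MeasurableSet.univ hQP, smul_apply, hP, hQ, smul_eq_mul,
      ENNReal.mul_tsub_self_eq hk hk_ne_top hc_ne_top] at hPμ₀
    rw [sub_apply MeasurableSet.univ hPQ, smul_apply, hP, hQ, smul_eq_mul,
      ENNReal.mul_tsub_self_eq hk hk_ne_top hc_ne_top] at hQμ₁
    exact ⟨μ₀, μ₁, hμ₀, hμ₁,
      eq_smul_add_smul_of_sub_eq_smul hk1 hk_ne_top hc hc_ne_top hPQ hQP hPμ₀ hQμ₁,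
      (eq_smul_add_smul_of_sub_eq_smul hk1 hk_ne_top hc hc_ne_top hQP hPQ hQμ₁ hPμ₀).trans
        (add_comm _ _)⟩

end Measure

end MeasureTheory

theorem tildeX0_bind {S : Type*} [MeasurableSpace S] (ε δ : ℝ) (κ : Kernel (Fin 4) S) :
    (tildeX0 ε δ).bind κ = ENNReal.ofReal δ • κ 0 +
      ENNReal.ofReal ((1 - δ) * Real.exp ε / (1 + Real.exp ε)) • κ 1 +
      ENNReal.ofReal ((1 - δ) / (1 + Real.exp ε)) • κ 2 := by
  simp only [tildeX0, Measure.add_bind, Measure.bind_smul, Measure.dirac_bind κ.measurable]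

theorem tildeX1_bind {S : Type*} [MeasurableSpace S] (ε δ : ℝ) (κ : Kernel (Fin 4) S) :
    (tildeX1 ε δ).bind κ = ENNReal.ofReal ((1 - δ) / (1 + Real.exp ε)) • κ 1 +
      ENNReal.ofReal ((1 - δ) * Real.exp ε / (1 + Real.exp ε)) • κ 2 +
      ENNReal.ofReal δ • κ 3 := by
  simp only [tildeX1, Measure.add_bind, Measure.bind_smul, Measure.dirac_bind κ.measurable]

/-- any `(ε,δ)`-LDP randomizer evaluated at two points is a common
post-processing (via a single Markov kernel) of the dominating pair `X̃₀, X̃₁`. -/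
theorem statement_4 {D S : Type*} [MeasurableSpace D] [MeasurableSpace S]
    (ε δ : ℝ) (hε : 0 ≤ ε) (hδ : δ ∈ Set.Ico (0:ℝ) 1)
    (R : Kernel D S) [IsMarkovKernel R] (hR : IsLDPKernel R ε δ) (x0 x1 : D) :
    ∃ proc : Kernel (Fin 4) S, IsMarkovKernel proc ∧
      R x0 = (tildeX0 ε δ).bind (fun z => proc z) ∧
      R x1 = (tildeX1 ε δ).bind (fun z => proc z) := by
  set k := ENNReal.ofReal (Real.exp ε)
  set c := ENNReal.ofReal ((1 - δ) / (1 + Real.exp ε))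
  have hk : 1 ≤ k := ENNReal.one_le_ofReal.2 (Real.one_le_exp hε)
  have hc : c ≠ 0 := by simpa [c] using div_pos (sub_pos.2 hδ.2) (by positivity)
  have hkc : ENNReal.ofReal ((1 - δ) * Real.exp ε / (1 + Real.exp ε)) = k * c := by
    rw [← ENNReal.ofReal_mul (Real.exp_pos ε).le]; ring_nf
  have hmass : 1 - ENNReal.ofReal δ = (1 + k) * c := by
    rw [← ENNReal.ofReal_one, ← ENNReal.ofReal_sub _ hδ.1, ← ENNReal.ofReal_add zero_le_one
      (Real.exp_pos ε).le, ← ENNReal.ofReal_mul (by positivity), mul_div_cancel₀ _ (by positivity)]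
  obtain ⟨μA, μB, P', Q', hμA, hμB, hP, hQ, hP', hQ', hPQ, hQP⟩ :=
    Measure.exists_smul_add_of_le_mul_add hk ENNReal.ofReal_ne_top
      (ENNReal.ofReal_le_one.2 hδ.2.le) (hR x0 x1) (hR x1 x0)
  obtain ⟨μ₀, μ₁, hμ₀, hμ₁, hP'μ, hQ'μ⟩ := Measure.exists_eq_smul_add_smul_of_le_smul hk
    ENNReal.ofReal_ne_top hc ENNReal.ofReal_ne_top (hP'.trans hmass) (hQ'.trans hmass) hPQ hQP
  refine ⟨Kernel.ofFunOfCountable ![μA, μ₀, μ₁, μB], ⟨fun i => by fin_cases i <;> assumption⟩,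
    ?_, ?_⟩
  · rw [tildeX0_bind, hP, hP'μ, hkc, add_assoc]; rfl
  · rw [tildeX1_bind, hQ, hQ'μ, hkc]; rfl

end
end

section
/- Let A, P, Q, B be probability measures on a common measurable space, let s = TV(A,P) and t = TV(B,Q), and let F : [0,1] → ℝ be any function such that T(P,Q)(α') ≥ F(α') for all α' ∈ [0,1]. Then for every α ∈ [0, 1−s], T(A,B)(α) ≥ F(α + s) − t. -/
/-! A test `φ` of level `α` for `A` has level at most `α + TV(A,P)` for `P`, and its power
under `B` exceeds its power under `Q` by at most `TV(B,Q)`. Both facts are instances of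
`∫ φ dU - ∫ φ dV ≤ TV(U,V)` for `[0,1]`-valued `φ`, which holds because by the layer-cake
formula `φ` is an average over `t ∈ (0,1]` of the indicators of its superlevel sets
`{t ≤ φ}`. -/

open MeasureTheory

noncomputable section

/-- The trade-off function `T(U,V)` between two measures. -/
def tradeOff {Ω : Type*} [MeasurableSpace Ω] (U V : Measure Ω) (α : ℝ) : ℝ :=
  sInf {β : ℝ | ∃ φ : Ω → ℝ, Measurable φ ∧ (∀ ω, φ ω ∈ Set.Icc (0:ℝ) 1) ∧
    (∫ ω, φ ω ∂U) ≤ α ∧ β = 1 - ∫ ω, φ ω ∂V}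

/-- Total variation distance between two measures. -/
def tvDist {Ω : Type*} [MeasurableSpace Ω] (U V : Measure Ω) : ℝ :=
  sSup {d : ℝ | ∃ A : Set Ω, MeasurableSet A ∧ d = |(U A).toReal - (V A).toReal|}

section

variable {Ω : Type*} [MeasurableSpace Ω]

section TotalVariation

theorem tvDist_comm (U V : Measure Ω) : tvDist U V = tvDist V U := by
  unfold tvDist
  congr 1
  ext d
  constructor <;> rintro ⟨S, hS, rfl⟩ <;> exact ⟨S, hS, abs_sub_comm _ _⟩

variable (U V : Measure Ω) [IsProbabilityMeasure U] [IsProbabilityMeasure V]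

theorem measureReal_sub_le_tvDist {S : Set Ω} (hS : MeasurableSet S) :
    U.real S - V.real S ≤ tvDist U V := by
  have hbdd : BddAbove
      {d : ℝ | ∃ A : Set Ω, MeasurableSet A ∧ d = |(U A).toReal - (V A).toReal|} := by
    refine ⟨1, ?_⟩
    rintro d ⟨A, -, rfl⟩
    change |U.real A - V.real A| ≤ 1
    have hU : U.real A ≤ 1 := measureReal_le_one
    have hV : V.real A ≤ 1 := measureReal_le_one
    exact abs_sub_le_iff.2 ⟨by linarith [measureReal_nonneg (μ := V) (s := A)],
      by linarith [measureReal_nonneg (μ := U) (s := A)]⟩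
  exact (le_abs_self _).trans (le_csSup hbdd ⟨S, hS, rfl⟩)

theorem tvDist_nonneg : 0 ≤ tvDist U V := by
  simpa using measureReal_sub_le_tvDist U V MeasurableSet.empty

end TotalVariation

section LayerCake

theorem integrableOn_measureReal_le_Ioc (μ : Measure Ω) [IsFiniteMeasure μ] (φ : Ω → ℝ) :
    IntegrableOn (fun t : ℝ ↦ μ.real {ω | t ≤ φ ω}) (Set.Ioc 0 1) := by
  have hanti : Antitone fun t : ℝ ↦ μ.real {ω | t ≤ φ ω} :=
    fun _ _ hst ↦ measureReal_mono fun _ h ↦ hst.trans h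
  refine Measure.integrableOn_of_bounded (M := μ.real Set.univ) measure_Ioc_lt_top.ne
    hanti.measurable.aestronglyMeasurable (Filter.Eventually.of_forall fun t ↦ ?_)
  rw [Real.norm_of_nonneg measureReal_nonneg]
  exact measureReal_mono (Set.subset_univ _)

variable {φ : Ω → ℝ}

theorem integral_eq_integral_Ioc_measureReal_le (μ : Measure Ω) [IsFiniteMeasure μ]
    (hφ : Measurable φ) (hφ01 : ∀ ω, φ ω ∈ Set.Icc (0:ℝ) 1) :
    ∫ ω, φ ω ∂μ = ∫ t in Set.Ioc 0 1, μ.real {ω | t ≤ φ ω} := by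
  refine Integrable.integral_eq_integral_Ioc_meas_le ?_
    (Filter.Eventually.of_forall fun ω ↦ (hφ01 ω).1)
    (Filter.Eventually.of_forall fun ω ↦ (hφ01 ω).2)
  refine Integrable.of_bound hφ.aestronglyMeasurable 1 (Filter.Eventually.of_forall fun ω ↦ ?_)
  rw [Real.norm_of_nonneg (hφ01 ω).1]
  exact (hφ01 ω).2

theorem integral_sub_integral_le_tvDist (U V : Measure Ω) [IsProbabilityMeasure U]
    [IsProbabilityMeasure V] (hφ : Measurable φ) (hφ01 : ∀ ω, φ ω ∈ Set.Icc (0:ℝ) 1) :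
    ∫ ω, φ ω ∂U - ∫ ω, φ ω ∂V ≤ tvDist U V :=
  calc ∫ ω, φ ω ∂U - ∫ ω, φ ω ∂V
      = ∫ t in Set.Ioc 0 1, (U.real {ω | t ≤ φ ω} - V.real {ω | t ≤ φ ω}) := by
        rw [integral_eq_integral_Ioc_measureReal_le U hφ hφ01,
          integral_eq_integral_Ioc_measureReal_le V hφ hφ01, integral_sub
            (integrableOn_measureReal_le_Ioc U φ) (integrableOn_measureReal_le_Ioc V φ)]
    _ ≤ ∫ _ in Set.Ioc (0:ℝ) 1, tvDist U V :=
        integral_mono ((integrableOn_measureReal_le_Ioc U φ).sub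
          (integrableOn_measureReal_le_Ioc V φ)) (integrable_const _)
          fun _ ↦ measureReal_sub_le_tvDist U V (measurableSet_le measurable_const hφ)
    _ = tvDist U V := by simp

end LayerCake

section TradeOff

variable {U V : Measure Ω} {α c : ℝ} {φ : Ω → ℝ}

theorem tradeOff_le [IsFiniteMeasure V] (hφ : Measurable φ)
    (hφ01 : ∀ ω, φ ω ∈ Set.Icc (0:ℝ) 1) (hU : ∫ ω, φ ω ∂U ≤ α) :
    tradeOff U V α ≤ 1 - ∫ ω, φ ω ∂V := by
  refine csInf_le ⟨1 - V.real Set.univ, ?_⟩ ⟨φ, hφ, hφ01, hU, rfl⟩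
  rintro β ⟨ψ, -, hψ01, -, rfl⟩
  have hψ : ‖∫ ω, ψ ω ∂V‖ ≤ 1 * V.real Set.univ :=
    norm_integral_le_of_norm_le_const (Filter.Eventually.of_forall fun ω ↦ by
      rw [Real.norm_of_nonneg (hψ01 ω).1]; exact (hψ01 ω).2)
  linarith [le_abs_self (∫ ω, ψ ω ∂V), Real.norm_eq_abs (∫ ω, ψ ω ∂V)]

theorem le_tradeOff (hα : 0 ≤ α)
    (h : ∀ φ : Ω → ℝ, Measurable φ → (∀ ω, φ ω ∈ Set.Icc (0:ℝ) 1) →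
      ∫ ω, φ ω ∂U ≤ α → c ≤ 1 - ∫ ω, φ ω ∂V) :
    c ≤ tradeOff U V α := by
  refine le_csInf ⟨1, 0, measurable_const, fun _ ↦ ⟨le_rfl, zero_le_one⟩, by simpa, by simp⟩ ?_
  rintro β ⟨φ, hφ, hφ01, hU, rfl⟩
  exact h φ hφ hφ01 hU

theorem tradeOff_add_tvDist_sub_tvDist_le (A P Q B : Measure Ω) [IsProbabilityMeasure A]
    [IsProbabilityMeasure P] [IsProbabilityMeasure Q] [IsProbabilityMeasure B] (hα : 0 ≤ α) :
    tradeOff P Q (α + tvDist A P) - tvDist B Q ≤ tradeOff A B α := by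
  refine le_tradeOff hα fun φ hφ hφ01 hA ↦ ?_
  have hP : ∫ ω, φ ω ∂P ≤ α + tvDist A P := by
    linarith [integral_sub_integral_le_tvDist P A hφ hφ01, tvDist_comm P A]
  linarith [tradeOff_le (V := Q) hφ hφ01 hP, integral_sub_integral_le_tvDist B Q hφ hφ01]

end TradeOff

end

/-- if `T(P,Q) ≥ F` pointwise on `[0,1]`, then
`T(A,B)(α) ≥ F(α + TV(A,P)) - TV(B,Q)` for `α ∈ [0, 1 - TV(A,P)]`. -/
theorem statement_8 {Ω : Type*} [MeasurableSpace Ω] (A P Q B : Measure Ω)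
    [IsProbabilityMeasure A] [IsProbabilityMeasure P] [IsProbabilityMeasure Q]
    [IsProbabilityMeasure B] (F : ℝ → ℝ)
    (hF : ∀ α' ∈ Set.Icc (0:ℝ) 1, tradeOff P Q α' ≥ F α') :
    ∀ α ∈ Set.Icc (0:ℝ) (1 - tvDist A P),
      tradeOff A B α ≥ F (α + tvDist A P) - tvDist B Q := by
  intro α ⟨hα0, hα1⟩
  have hF' := hF (α + tvDist A P) ⟨by linarith [tvDist_nonneg A P], by linarith⟩
  linarith [tradeOff_add_tvDist_sub_tvDist_le A P Q B hα0]

end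
end
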